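/- arXiv:0709.4347 — 2 statements merged into one kernel-verified Lean document; each statement's English description precedes it below -/
import Mathlib

section
/- Let m = (m₀,m₁,m₂) ∈ ℤ³ with m₁,m₂ ≥ 0, m₀ ≥ −1, let p ∈ ℕ, and let G₊ = {(x₁,x₂,a) ∈ G : a > 1, r(x₁,x₂,a) > 1}. Then ∫_{G₊} a^{m₀} |x₁|^{m₁} |x₂|^{m₂} e^{−p·r(x₁,x₂,a)} a⁻¹ dx₁ dx₂ da < ∞ if and only if m₁ + m₂ − 2p < −2 and m₀ + m₁ + m₂ − p < −2. -/
/-!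
For `a ≥ 1`, `e^r` lies between `Q / (2a)` and `2Q / a`, where `Q = a² + x₁² + x₂²`, and
`{a > 6} ⊆ G₊ ⊆ {a > 1}`. Hence the integral is finite iff the integral of the model density
`a^(m₀-1+p) |x₁|^m₁ |x₂|^m₂ Q^(-p)` over `{a > c}` is finite, for `c = 1` and for `c = 6`.
Scaling `x₁` by `√(a² + x₂²)` and then `x₂` by `a` factors the model integral as
`D(m₁, -p) · D(m₂, (m₁+1)/2 - p) · ∫_c^∞ a^(m₀+m₁+m₂-p+1) da`, where
`D(s, q) = ∫ |t|^s (1 + t²)^q dt` (`japaneseBracketIntegral`) is finite iff `s + 2q < -1`.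
-/

open Real MeasureTheory Set

noncomputable section

abbrev G := ℝ × ℝ × ℝ

/-- `cosh r(x₁,x₂,a) = (a + a⁻¹ + a⁻¹(x₁²+x₂²))/2`. -/
def coshr (p : G) : ℝ := (p.2.2 + p.2.2⁻¹ + p.2.2⁻¹ * (p.1 ^ 2 + p.2.1 ^ 2)) / 2

/-- The distance from the identity: `r = arcosh (coshr)`. -/
def rG (p : G) : ℝ := Real.log (coshr p + Real.sqrt ((coshr p) ^ 2 - 1))

/-- The right Haar measure `dρ = a⁻¹ dx₁ dx₂ da` (supported on `a > 0`). -/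
def ρG : Measure G :=
  (volume : Measure G).withDensity (fun p => ENNReal.ofReal (if 0 < p.2.2 then p.2.2⁻¹ else 0))

/-- `G₊ = {(x₁,x₂,a) : a > 1, r > 1}`. -/
def Gplus : Set G := {p : G | 1 < p.2.2 ∧ 1 < rG p}

open scoped ENNReal

lemma setLIntegral_ofReal_pos {α : Type*} [MeasurableSpace α] {μ : Measure α} {f : α → ℝ}
    (hf : Measurable f) {s : Set α} (hs : 0 < μ s) (hpos : ∀ x ∈ s, 0 < f x) :
    0 < ∫⁻ x in s, ENNReal.ofReal (f x) ∂μ := by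
  rw [setLIntegral_pos_iff hf.ennreal_ofReal]
  exact hs.trans_le (measure_mono fun x hx => ⟨by simpa using hpos x hx, hx⟩)

lemma lintegral_eq_mul_lintegral_comp_mul_left (f : ℝ → ℝ≥0∞) {c : ℝ} (hc : 0 < c) :
    ∫⁻ x, f x = ENNReal.ofReal c * ∫⁻ x, f (c * x) := by
  have hmap : ∫⁻ x, f (c * x) = ∫⁻ y, f y ∂(Measure.map (c * ·) volume) :=
    ((Homeomorph.mulLeft₀ c hc.ne').measurableEmbedding.lintegral_map f).symm
  rw [hmap, Real.map_volume_mul_left hc.ne', lintegral_smul_measure, abs_of_pos (inv_pos.2 hc),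
    smul_eq_mul, ← mul_assoc, ← ENNReal.ofReal_mul hc.le, mul_inv_cancel₀ hc.ne',
    ENNReal.ofReal_one, one_mul]

lemma lintegral_Ioi_rpow_lt_top_iff {c u : ℝ} (hc : 0 < c) :
    ∫⁻ t in Ioi c, ENNReal.ofReal (t ^ u) < ⊤ ↔ u < -1 := by
  have hnonneg : 0 ≤ᵐ[volume.restrict (Ioi c)] fun t : ℝ => t ^ u :=
    ae_restrict_of_forall_mem measurableSet_Ioi fun t ht => Real.rpow_nonneg (hc.trans ht).le u
  rw [← hasFiniteIntegral_iff_ofReal hnonneg, ← integrableOn_Ioi_rpow_iff hc]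
  exact ⟨fun h => ⟨by fun_prop, h⟩, fun h => h.2⟩

lemma lintegral_Ioi_rpow_pos (c u : ℝ) : 0 < ∫⁻ t in Ioi c, ENNReal.ofReal (t ^ u) := by
  refine lt_of_lt_of_le ?_ (lintegral_mono_set (Ioi_subset_Ioi (le_max_left c 0)))
  refine setLIntegral_ofReal_pos (by fun_prop) (by simp) fun t ht => ?_
  exact Real.rpow_pos_of_pos ((le_max_right c 0).trans_lt ht) u

def japaneseBracketIntegral (s q : ℝ) : ℝ≥0∞ :=
  ∫⁻ t : ℝ, ENNReal.ofReal (|t| ^ s * (1 + t ^ 2) ^ q)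

lemma lintegral_mul_abs_rpow_mul_add_sq_rpow {A B : ℝ} (hA : 0 < A) (hB : 0 ≤ B) (s q : ℝ) :
    ∫⁻ t : ℝ, ENNReal.ofReal (B * (|t| ^ s * (A + t ^ 2) ^ q)) =
      ENNReal.ofReal (B * A ^ ((s + 1) / 2 + q)) * japaneseBracketIntegral s q := by
  have hA' : 0 < √A := Real.sqrt_pos.2 hA
  have hscale : ∀ t : ℝ, B * (|√A * t| ^ s * (A + (√A * t) ^ 2) ^ q) =
      B * A ^ (s / 2 + q) * (|t| ^ s * (1 + t ^ 2) ^ q) := by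
    intro t
    rw [mul_pow, Real.sq_sqrt hA.le, ← mul_one_add, abs_mul, abs_of_pos hA',
      Real.mul_rpow hA'.le (abs_nonneg t), Real.mul_rpow hA.le (by positivity),
      Real.sqrt_eq_rpow, ← Real.rpow_mul hA.le, Real.rpow_add hA]
    ring_nf
  rw [lintegral_eq_mul_lintegral_comp_mul_left _ hA']
  simp_rw [hscale, ENNReal.ofReal_mul (by positivity : 0 ≤ B * A ^ (s / 2 + q))]
  rw [lintegral_const_mul' _ _ ENNReal.ofReal_ne_top, japaneseBracketIntegral, ← mul_assoc,
    ← ENNReal.ofReal_mul hA'.le, Real.sqrt_eq_rpow, mul_left_comm, ← Real.rpow_add hA]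
  ring_nf

lemma japaneseBracketIntegral_pos (s q : ℝ) : 0 < japaneseBracketIntegral s q := by
  refine lt_of_lt_of_le ?_ (setLIntegral_le_lintegral (Ioi 0) _)
  refine setLIntegral_ofReal_pos (by fun_prop) (by simp) fun t ht => ?_
  have ht : 0 < t := ht
  positivity

lemma japaneseBracketIntegral_lt_top {s q : ℝ} (hs : 0 ≤ s) (h : s + 2 * q < -1) :
    japaneseBracketIntegral s q < ⊤ := by
  have hint := integrable_rpow_neg_one_add_norm_sq (E := ℝ) (μ := volume) (r := -(s + 2 * q))
    (by rw [Module.finrank_self]; push_cast; linarith)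
  have hbound :
      ∀ t : ℝ, |t| ^ s * (1 + t ^ 2) ^ q ≤ (1 + ‖t‖ ^ 2) ^ (-(-(s + 2 * q)) / 2) := by
    intro t
    have habs : |t| ^ s ≤ (1 + t ^ 2) ^ (s / 2) := by
      rw [div_eq_mul_inv, mul_comm, Real.rpow_mul (by positivity), ← one_div,
        ← Real.sqrt_eq_rpow]
      exact Real.rpow_le_rpow (abs_nonneg t) (Real.abs_le_sqrt (by linarith)) hs
    rw [neg_neg, Real.norm_eq_abs, sq_abs, add_div, Real.rpow_add (by positivity),
      mul_div_cancel_left₀ q two_ne_zero]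
    exact mul_le_mul_of_nonneg_right habs (by positivity)
  refine (lintegral_mono fun t => ENNReal.ofReal_le_ofReal (hbound t)).trans_lt ?_
  rw [← hasFiniteIntegral_iff_ofReal (ae_of_all _ fun t => by positivity)]
  exact hint.2

lemma japaneseBracketIntegral_eq_top {s q : ℝ} (h : -1 ≤ s + 2 * q) :
    japaneseBracketIntegral s q = ⊤ := by
  have hlower : ∀ t ∈ Ioi (1 : ℝ),
      min 1 (2 ^ q) * t ^ (s + 2 * q) ≤ |t| ^ s * (1 + t ^ 2) ^ q := by
    intro t ht
    have ht0 : 0 < t := one_pos.trans ht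
    have hbracket : min 1 (2 ^ q) * (t ^ 2) ^ q ≤ (1 + t ^ 2) ^ q := by
      rcases le_or_gt q 0 with hq | hq
      · calc min 1 (2 ^ q) * (t ^ 2) ^ q ≤ 2 ^ q * (t ^ 2) ^ q := by
              gcongr; exact min_le_right _ _
          _ = (2 * t ^ 2) ^ q := (Real.mul_rpow (by norm_num) (by positivity)).symm
          _ ≤ (1 + t ^ 2) ^ q :=
            Real.rpow_le_rpow_of_nonpos (by positivity) (by nlinarith [ht.out]) hq
      · calc min 1 (2 ^ q) * (t ^ 2) ^ q ≤ 1 * (t ^ 2) ^ q := by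
              gcongr; exact min_le_left _ _
          _ ≤ (1 + t ^ 2) ^ q := by
            rw [one_mul]; exact Real.rpow_le_rpow (by positivity) (by linarith) hq.le
    rw [abs_of_pos ht0, Real.rpow_add ht0, mul_left_comm, Real.rpow_mul ht0.le, Real.rpow_two]
    exact mul_le_mul_of_nonneg_left hbracket (by positivity)
  have hdiv : ∫⁻ t in Ioi 1, ENNReal.ofReal (t ^ (s + 2 * q)) = ⊤ := by
    by_contra hne
    have := (lintegral_Ioi_rpow_lt_top_iff one_pos).1 (lt_top_iff_ne_top.2 hne)
    linarith
  have hc : ENNReal.ofReal (min 1 (2 ^ q)) ≠ 0 := by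
    rw [ne_eq, ENNReal.ofReal_eq_zero, not_le]
    positivity
  refine top_le_iff.1 ?_
  calc ⊤ = ENNReal.ofReal (min 1 (2 ^ q)) *
        ∫⁻ t in Ioi 1, ENNReal.ofReal (t ^ (s + 2 * q)) := by
        rw [hdiv, ENNReal.mul_top hc]
    _ = ∫⁻ t in Ioi 1, ENNReal.ofReal (min 1 (2 ^ q) * t ^ (s + 2 * q)) := by
        rw [← lintegral_const_mul' _ _ ENNReal.ofReal_ne_top]
        simp_rw [ENNReal.ofReal_mul (by positivity : (0 : ℝ) ≤ min 1 (2 ^ q))]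
    _ ≤ ∫⁻ t in Ioi 1, ENNReal.ofReal (|t| ^ s * (1 + t ^ 2) ^ q) :=
        setLIntegral_mono' measurableSet_Ioi fun t ht => ENNReal.ofReal_le_ofReal (hlower t ht)
    _ ≤ japaneseBracketIntegral s q := setLIntegral_le_lintegral _ _

lemma japaneseBracketIntegral_lt_top_iff {s q : ℝ} (hs : 0 ≤ s) :
    japaneseBracketIntegral s q < ⊤ ↔ s + 2 * q < -1 :=
  ⟨fun h => not_le.1 fun h' => h.ne (japaneseBracketIntegral_eq_top h'),
    japaneseBracketIntegral_lt_top hs⟩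

def modelDensity (τ s₁ s₂ q : ℝ) (x : G) : ℝ :=
  x.2.2 ^ τ * |x.1| ^ s₁ * |x.2.1| ^ s₂ * (x.2.2 ^ 2 + x.1 ^ 2 + x.2.1 ^ 2) ^ q

@[fun_prop]
lemma measurable_modelDensity (τ s₁ s₂ q : ℝ) : Measurable (modelDensity τ s₁ s₂ q) := by
  unfold modelDensity
  fun_prop

lemma lintegral_lintegral_modelDensity {a : ℝ} (ha : 0 < a) (τ s₁ s₂ q : ℝ) :
    ∫⁻ x₂ : ℝ, ∫⁻ x₁ : ℝ, ENNReal.ofReal (modelDensity τ s₁ s₂ q (x₁, x₂, a)) =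
      ENNReal.ofReal (a ^ (τ + s₁ + s₂ + 2 + 2 * q)) *
        japaneseBracketIntegral s₂ ((s₁ + 1) / 2 + q) * japaneseBracketIntegral s₁ q := by
  have hsplit : ∀ x₁ x₂ : ℝ, modelDensity τ s₁ s₂ q (x₁, x₂, a) =
      a ^ τ * |x₂| ^ s₂ * (|x₁| ^ s₁ * ((a ^ 2 + x₂ ^ 2) + x₁ ^ 2) ^ q) := by
    intro x₁ x₂
    rw [modelDensity, add_right_comm (a ^ 2)]
    ring
  simp_rw [hsplit]
  have hinner : ∀ x₂ : ℝ, ∫⁻ x₁ : ℝ,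
      ENNReal.ofReal (a ^ τ * |x₂| ^ s₂ * (|x₁| ^ s₁ * ((a ^ 2 + x₂ ^ 2) + x₁ ^ 2) ^ q)) =
        ENNReal.ofReal (a ^ τ * (|x₂| ^ s₂ * (a ^ 2 + x₂ ^ 2) ^ ((s₁ + 1) / 2 + q))) *
          japaneseBracketIntegral s₁ q := by
    intro x₂
    rw [lintegral_mul_abs_rpow_mul_add_sq_rpow (by positivity) (by positivity), mul_assoc]
  simp_rw [hinner]
  rw [lintegral_mul_const _ (by fun_prop),
    lintegral_mul_abs_rpow_mul_add_sq_rpow (by positivity) (by positivity), ← Real.rpow_natCast,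
    ← Real.rpow_mul ha.le, ← Real.rpow_add ha]
  ring_nf

lemma lintegral_modelDensity {c : ℝ} (hc : 0 ≤ c) (τ s₁ s₂ q : ℝ) :
    ∫⁻ x in {x : G | c < x.2.2}, ENNReal.ofReal (modelDensity τ s₁ s₂ q x) =
      japaneseBracketIntegral s₁ q * japaneseBracketIntegral s₂ ((s₁ + 1) / 2 + q) *
        ∫⁻ a in Ioi c, ENNReal.ofReal (a ^ (τ + s₁ + s₂ + 2 + 2 * q)) := by
  have hset : {x : G | c < x.2.2} = univ ×ˢ (univ ×ˢ Ioi c) := by ext; simp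
  rw [hset, Measure.volume_eq_prod, Measure.volume_eq_prod, ← Measure.prod_restrict,
    ← Measure.prod_restrict, Measure.restrict_univ, lintegral_prod_symm' _ (by fun_prop),
    lintegral_prod_symm'
      (fun y : ℝ × ℝ => ∫⁻ x₁, ENNReal.ofReal (modelDensity τ s₁ s₂ q (x₁, y)))
      (measurable_modelDensity τ s₁ s₂ q).ennreal_ofReal.lintegral_prod_left']
  rw [setLIntegral_congr_fun measurableSet_Ioi fun a ha =>
    lintegral_lintegral_modelDensity (hc.trans_lt ha) τ s₁ s₂ q,
    lintegral_mul_const _ (by fun_prop), lintegral_mul_const _ (by fun_prop)]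
  ring

lemma lintegral_modelDensity_lt_top_iff {c τ s₁ s₂ q : ℝ} (hc : 0 < c) (hs₁ : 0 ≤ s₁)
    (hs₂ : 0 ≤ s₂) :
    ∫⁻ x in {x : G | c < x.2.2}, ENNReal.ofReal (modelDensity τ s₁ s₂ q x) < ⊤ ↔
      s₁ + s₂ + 2 * q < -2 ∧ τ + s₁ + s₂ + 2 * q < -3 := by
  have h₁ := (japaneseBracketIntegral_pos s₁ q).ne'
  have h₂ := (japaneseBracketIntegral_pos s₂ ((s₁ + 1) / 2 + q)).ne'
  have h₃ := (lintegral_Ioi_rpow_pos c (τ + s₁ + s₂ + 2 + 2 * q)).ne'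
  simp only [lintegral_modelDensity hc.le, ENNReal.mul_lt_top_iff, mul_eq_zero, h₁, h₂, h₃,
    or_self, or_false, japaneseBracketIntegral_lt_top_iff hs₁,
    japaneseBracketIntegral_lt_top_iff hs₂, lintegral_Ioi_rpow_lt_top_iff hc]
  constructor
  · rintro ⟨⟨-, h⟩, h'⟩
    constructor <;> linarith
  · rintro ⟨h, h'⟩
    refine ⟨⟨?_, ?_⟩, ?_⟩ <;> linarith

lemma coshr_eq {x : G} (ha : 0 < x.2.2) :
    coshr x = (x.2.2 ^ 2 + x.1 ^ 2 + x.2.1 ^ 2 + 1) / (2 * x.2.2) := by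
  rw [coshr]
  field_simp
  ring

lemma one_le_coshr {x : G} (ha : 0 < x.2.2) : 1 ≤ coshr x := by
  rw [coshr_eq ha, le_div_iff₀ (by positivity)]
  nlinarith [sq_nonneg (x.2.2 - 1), sq_nonneg x.1, sq_nonneg x.2.1]

lemma exp_rG {x : G} (ha : 0 < x.2.2) : exp (rG x) = coshr x + √(coshr x ^ 2 - 1) :=
  Real.exp_log (by linarith [one_le_coshr ha, Real.sqrt_nonneg (coshr x ^ 2 - 1)])

lemma div_le_exp_rG {x : G} (ha : 0 < x.2.2) :
    (x.2.2 ^ 2 + x.1 ^ 2 + x.2.1 ^ 2) / (2 * x.2.2) ≤ exp (rG x) := by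
  have hcosh : (x.2.2 ^ 2 + x.1 ^ 2 + x.2.1 ^ 2) / (2 * x.2.2) ≤ coshr x := by
    rw [coshr_eq ha]
    exact div_le_div_of_nonneg_right (by linarith) (by positivity)
  rw [exp_rG ha]
  linarith [Real.sqrt_nonneg (coshr x ^ 2 - 1)]

lemma exp_rG_le {x : G} (ha : 1 ≤ x.2.2) :
    exp (rG x) ≤ 2 * (x.2.2 ^ 2 + x.1 ^ 2 + x.2.1 ^ 2) / x.2.2 := by
  have ha₀ : 0 < x.2.2 := one_pos.trans_le ha
  have hcosh := one_le_coshr ha₀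
  have hsqrt : √(coshr x ^ 2 - 1) ≤ coshr x :=
    Real.sqrt_le_iff.2 ⟨by linarith, by linarith⟩
  have hQ : coshr x ≤ (x.2.2 ^ 2 + x.1 ^ 2 + x.2.1 ^ 2) / x.2.2 := by
    rw [coshr_eq ha₀, div_le_div_iff₀ (by positivity) ha₀]
    nlinarith [sq_nonneg x.1, sq_nonneg x.2.1]
  rw [exp_rG ha₀, mul_div_assoc]
  linarith

lemma subset_Gplus : {x : G | 6 < x.2.2} ⊆ Gplus := by
  intro x (ha : 6 < x.2.2)
  have ha₀ : 0 < x.2.2 := by linarith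
  refine ⟨by linarith, ?_⟩
  have hQ : x.2.2 / 2 ≤ (x.2.2 ^ 2 + x.1 ^ 2 + x.2.1 ^ 2) / (2 * x.2.2) := by
    rw [div_le_div_iff₀ two_pos (by positivity)]
    nlinarith [sq_nonneg x.1, sq_nonneg x.2.1]
  -- `e^r ≥ a / 2 > 3 > e`
  rw [← Real.exp_lt_exp]
  linarith [div_le_exp_rG ha₀, Real.exp_one_lt_d9]

def monomialExp (m₀ m₁ m₂ : ℤ) (p : ℕ) (x : G) : ℝ :=
  x.2.2 ^ m₀ * |x.1| ^ m₁ * |x.2.1| ^ m₂ * exp (-(p : ℝ) * rG x)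

lemma modelDensity_eq {x : G} (ha : 0 < x.2.2) (m₀ m₁ m₂ : ℤ) (p : ℕ) :
    modelDensity ((m₀ : ℝ) - 1 + p) m₁ m₂ (-(p : ℝ)) x =
      x.2.2⁻¹ * (x.2.2 ^ m₀ * |x.1| ^ m₁ * |x.2.1| ^ m₂) *
        (((x.2.2 ^ 2 + x.1 ^ 2 + x.2.1 ^ 2) / x.2.2) ^ p)⁻¹ := by
  rw [modelDensity, Real.rpow_add ha, Real.rpow_sub ha, Real.rpow_one, Real.rpow_intCast,
    Real.rpow_intCast, Real.rpow_intCast, Real.rpow_natCast, Real.rpow_neg (by positivity),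
    Real.rpow_natCast, div_pow]
  field_simp

lemma inv_mul_monomialExp_le {x : G} (ha : 0 < x.2.2) (m₀ m₁ m₂ : ℤ) (p : ℕ) :
    x.2.2⁻¹ * monomialExp m₀ m₁ m₂ p x ≤
      2 ^ p * modelDensity ((m₀ : ℝ) - 1 + p) m₁ m₂ (-(p : ℝ)) x := by
  calc x.2.2⁻¹ * monomialExp m₀ m₁ m₂ p x
      = x.2.2⁻¹ * (x.2.2 ^ m₀ * |x.1| ^ m₁ * |x.2.1| ^ m₂) * (exp (rG x) ^ p)⁻¹ := by
        rw [monomialExp, neg_mul, Real.exp_neg, ← Real.exp_nat_mul]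
        ring
    _ ≤ x.2.2⁻¹ * (x.2.2 ^ m₀ * |x.1| ^ m₁ * |x.2.1| ^ m₂) *
          (((x.2.2 ^ 2 + x.1 ^ 2 + x.2.1 ^ 2) / (2 * x.2.2)) ^ p)⁻¹ := by
        gcongr
        exact div_le_exp_rG ha
    _ = 2 ^ p * modelDensity ((m₀ : ℝ) - 1 + p) m₁ m₂ (-(p : ℝ)) x := by
        rw [modelDensity_eq ha, mul_comm (2 : ℝ), ← div_div, div_pow _ 2, inv_div,
          div_eq_mul_inv (2 ^ p)]
        ring

lemma le_inv_mul_monomialExp {x : G} (ha : 1 ≤ x.2.2) (m₀ m₁ m₂ : ℤ) (p : ℕ) :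
    (2 ^ p)⁻¹ * modelDensity ((m₀ : ℝ) - 1 + p) m₁ m₂ (-(p : ℝ)) x ≤
      x.2.2⁻¹ * monomialExp m₀ m₁ m₂ p x := by
  have ha₀ : 0 < x.2.2 := one_pos.trans_le ha
  calc (2 ^ p)⁻¹ * modelDensity ((m₀ : ℝ) - 1 + p) m₁ m₂ (-(p : ℝ)) x
      = x.2.2⁻¹ * (x.2.2 ^ m₀ * |x.1| ^ m₁ * |x.2.1| ^ m₂) *
          ((2 * (x.2.2 ^ 2 + x.1 ^ 2 + x.2.1 ^ 2) / x.2.2) ^ p)⁻¹ := by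
        rw [modelDensity_eq ha₀, mul_div_assoc, mul_pow, mul_inv]
        ring
    _ ≤ x.2.2⁻¹ * (x.2.2 ^ m₀ * |x.1| ^ m₁ * |x.2.1| ^ m₂) * (exp (rG x) ^ p)⁻¹ := by
        gcongr
        exact exp_rG_le ha
    _ = x.2.2⁻¹ * monomialExp m₀ m₁ m₂ p x := by
        rw [monomialExp, neg_mul, Real.exp_neg, ← Real.exp_nat_mul]
        ring

lemma measurableSet_lt_snd_snd (c : ℝ) : MeasurableSet {x : G | c < x.2.2} :=
  measurableSet_lt measurable_const (by fun_prop)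

lemma setLIntegral_ρG {s : Set G} (hs : MeasurableSet s) (hs₀ : ∀ x ∈ s, 0 < x.2.2)
    (f : G → ℝ) :
    ∫⁻ x in s, ENNReal.ofReal (f x) ∂ρG = ∫⁻ x in s, ENNReal.ofReal (x.2.2⁻¹ * f x) := by
  have hdensity : Measurable fun x : G => ENNReal.ofReal (if 0 < x.2.2 then x.2.2⁻¹ else 0) :=
    (Measurable.ite (measurableSet_lt_snd_snd 0) (by fun_prop) measurable_const).ennreal_ofReal
  rw [ρG, setLIntegral_withDensity_eq_setLIntegral_mul_non_measurable₀' _ s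
    hdensity.aemeasurable _ (ae_of_all _ fun _ => ENNReal.ofReal_lt_top)]
  refine setLIntegral_congr_fun hs fun x hx => ?_
  rw [Pi.mul_apply, if_pos (hs₀ x hx), ← ENNReal.ofReal_mul (inv_nonneg.2 (hs₀ x hx).le)]

lemma lintegral_Gplus_le (m₀ m₁ m₂ : ℤ) (p : ℕ) :
    ∫⁻ x in Gplus, ENNReal.ofReal (monomialExp m₀ m₁ m₂ p x) ∂ρG ≤
      ENNReal.ofReal (2 ^ p) * ∫⁻ x in {x : G | 1 < x.2.2},
        ENNReal.ofReal (modelDensity ((m₀ : ℝ) - 1 + p) m₁ m₂ (-(p : ℝ)) x) := by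
  have hpos : ∀ x ∈ {x : G | 1 < x.2.2}, 0 < x.2.2 :=
    fun x (hx : 1 < x.2.2) => one_pos.trans hx
  calc ∫⁻ x in Gplus, ENNReal.ofReal (monomialExp m₀ m₁ m₂ p x) ∂ρG
      ≤ ∫⁻ x in {x : G | 1 < x.2.2}, ENNReal.ofReal (monomialExp m₀ m₁ m₂ p x) ∂ρG :=
        lintegral_mono_set fun x hx => hx.1
    _ = ∫⁻ x in {x : G | 1 < x.2.2}, ENNReal.ofReal (x.2.2⁻¹ * monomialExp m₀ m₁ m₂ p x) :=
        setLIntegral_ρG (measurableSet_lt_snd_snd 1) hpos _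
    _ ≤ ∫⁻ x in {x : G | 1 < x.2.2},
          ENNReal.ofReal (2 ^ p * modelDensity ((m₀ : ℝ) - 1 + p) m₁ m₂ (-(p : ℝ)) x) :=
        setLIntegral_mono' (measurableSet_lt_snd_snd 1) fun x hx =>
          ENNReal.ofReal_le_ofReal (inv_mul_monomialExp_le (hpos x hx) m₀ m₁ m₂ p)
    _ = _ := by
        simp_rw [ENNReal.ofReal_mul (by positivity : (0 : ℝ) ≤ 2 ^ p)]
        exact lintegral_const_mul' _ _ ENNReal.ofReal_ne_top

lemma le_lintegral_Gplus (m₀ m₁ m₂ : ℤ) (p : ℕ) :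
    ENNReal.ofReal (2 ^ p)⁻¹ * ∫⁻ x in {x : G | 6 < x.2.2},
        ENNReal.ofReal (modelDensity ((m₀ : ℝ) - 1 + p) m₁ m₂ (-(p : ℝ)) x) ≤
      ∫⁻ x in Gplus, ENNReal.ofReal (monomialExp m₀ m₁ m₂ p x) ∂ρG := by
  have hge : ∀ x ∈ {x : G | 6 < x.2.2}, 1 ≤ x.2.2 := fun x (hx : 6 < x.2.2) => by linarith
  calc ENNReal.ofReal (2 ^ p)⁻¹ * ∫⁻ x in {x : G | 6 < x.2.2},
        ENNReal.ofReal (modelDensity ((m₀ : ℝ) - 1 + p) m₁ m₂ (-(p : ℝ)) x)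
      = ∫⁻ x in {x : G | 6 < x.2.2},
          ENNReal.ofReal ((2 ^ p)⁻¹ * modelDensity ((m₀ : ℝ) - 1 + p) m₁ m₂ (-(p : ℝ)) x) := by
        simp_rw [ENNReal.ofReal_mul (by positivity : (0 : ℝ) ≤ (2 ^ p)⁻¹)]
        exact (lintegral_const_mul' _ _ ENNReal.ofReal_ne_top).symm
    _ ≤ ∫⁻ x in {x : G | 6 < x.2.2}, ENNReal.ofReal (x.2.2⁻¹ * monomialExp m₀ m₁ m₂ p x) :=
        setLIntegral_mono' (measurableSet_lt_snd_snd 6) fun x hx =>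
          ENNReal.ofReal_le_ofReal (le_inv_mul_monomialExp (hge x hx) m₀ m₁ m₂ p)
    _ = ∫⁻ x in {x : G | 6 < x.2.2}, ENNReal.ofReal (monomialExp m₀ m₁ m₂ p x) ∂ρG :=
        (setLIntegral_ρG (measurableSet_lt_snd_snd 6)
          (fun x hx => one_pos.trans_le (hge x hx)) _).symm
    _ ≤ _ := lintegral_mono_set subset_Gplus

theorem integrability_on_Gplus_general (m₀ m₁ m₂ : ℤ) (hm₁ : 0 ≤ m₁) (hm₂ : 0 ≤ m₂)
    (p : ℕ) :
    (∫⁻ x in Gplus, ENNReal.ofReal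
        (x.2.2 ^ m₀ * |x.1| ^ m₁ * |x.2.1| ^ m₂ * Real.exp (-(p : ℝ) * rG x)) ∂ρG) < ⊤ ↔
      (m₁ + m₂ - 2 * (p : ℤ) < -2 ∧ m₀ + m₁ + m₂ - (p : ℤ) < -2) := by
  have hmodel : ∀ c : ℝ, 0 < c →
      (∫⁻ x in {x : G | c < x.2.2},
        ENNReal.ofReal (modelDensity ((m₀ : ℝ) - 1 + p) m₁ m₂ (-(p : ℝ)) x) < ⊤ ↔
      (m₁ + m₂ - 2 * (p : ℤ) < -2 ∧ m₀ + m₁ + m₂ - (p : ℤ) < -2)) := by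
    intro c hc
    rw [lintegral_modelDensity_lt_top_iff hc (by exact_mod_cast hm₁) (by exact_mod_cast hm₂)]
    refine and_congr ?_ ?_ <;> rw [← Int.cast_lt (R := ℝ)] <;> push_cast <;>
      constructor <;> intro h <;> linarith
  constructor
  · intro hfin
    have hlower := (le_lintegral_Gplus m₀ m₁ m₂ p).trans_lt hfin
    exact (hmodel 6 (by norm_num)).1
      (ENNReal.lt_top_of_mul_ne_top_right hlower.ne (ENNReal.ofReal_pos.2 (by positivity)).ne')
  · intro h
    exact (lintegral_Gplus_le m₀ m₁ m₂ p).trans_lt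
      (ENNReal.mul_lt_top ENNReal.ofReal_lt_top ((hmodel 1 one_pos).2 h))

/-- Lemma 2.2 (i): for `m = (m₀,m₁,m₂) ∈ ℤ³` with `m₁,m₂ ≥ 0`, `m₀ ≥ -1`, and `p ∈ ℕ`,
the function `x^m e^{-p r}` is integrable on `G₊` with respect to `ρ` iff
`m₁ + m₂ - 2p < -2` and `m₀ + m₁ + m₂ - p < -2`. -/
theorem integrability_on_Gplus (m₀ m₁ m₂ : ℤ) (hm₁ : 0 ≤ m₁) (hm₂ : 0 ≤ m₂) (hm₀ : -1 ≤ m₀)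
    (p : ℕ) :
    (∫⁻ x in Gplus, ENNReal.ofReal
        (x.2.2 ^ m₀ * |x.1| ^ m₁ * |x.2.1| ^ m₂ * Real.exp (-(p : ℝ) * rG x)) ∂ρG) < ⊤ ↔
      (m₁ + m₂ - 2 * (p : ℤ) < -2 ∧ m₀ + m₁ + m₂ - (p : ℤ) < -2) :=
  integrability_on_Gplus_general m₀ m₁ m₂ hm₁ hm₂ p
end
end

section
/- For any A > 1 and B'' > 1, the integral over the region Γ'' = {(x₁,x₂,a) : 1−ε'' < x₂/x₁ < 1+ε'', x₁ > B''a, a > 2A} (with 0 < ε'' < 1) of the function Φ(x₁,x₂,a) = 1/(log(a⁻¹x₁²)·(a⁻¹x₁²)²) with respect to the measure a⁻¹ dx₁ dx₂ da diverges: ∫_{Γ''} Φ dρ = ∞. -/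
/-!
Decompose `Γ''` dyadically in `a`: for `T = 2A·2ⁿ` and `L = 2BT`, the box
`(L, (1+ε)L)² × (T, 2T)` lies in `Γ''`. On it `1 < a⁻¹x₁² ≤ K := 16B²T` and `a⁻¹ ≥ (2T)⁻¹`, so
its contribution to the integral is at least `ε² / (128 B² log K)`. Since `log K ≍ n`, the
contributions of the disjoint boxes form a divergent harmonic series.
-/

open Real MeasureTheory Set

noncomputable section

def Φfun (p : G) : ℝ :=
  1 / (Real.log (p.2.2⁻¹ * p.1 ^ 2) * (p.2.2⁻¹ * p.1 ^ 2) ^ 2)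

open Function

lemma ENNReal.tsum_ofReal_div_natCast_add_one_eq_top {c : ℝ} (hc : 0 < c) :
    ∑' n : ℕ, ENNReal.ofReal (c / (n + 1)) = ⊤ := by
  by_contra h
  have hsum : Summable fun n : ℕ => c / ((n + 1 : ℕ) : ℝ) := by
    have htoReal (n : ℕ) : (ENNReal.ofReal (c / (n + 1))).toReal = c / ((n + 1 : ℕ) : ℝ) := by
      rw [ENNReal.toReal_ofReal (by positivity)]; push_cast; rfl
    simpa only [htoReal] using ENNReal.summable_toReal h
  refine not_summable_one_div_natCast ((summable_nat_add_iff 1).mp ?_)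
  simpa [div_eq_mul_inv, hc.ne'] using hsum.mul_left c⁻¹

lemma Real.log_mul_two_pow_le {K : ℝ} (hK : 2 ≤ K) (n : ℕ) :
    log (K * 2 ^ n) ≤ (n + 1) * log K := by
  have hlog2 : log 2 ≤ log K := log_le_log (by norm_num) hK
  rw [log_mul (by positivity) (by positivity), log_pow]
  nlinarith [(n.cast_nonneg : (0 : ℝ) ≤ n)]

lemma ENNReal.tsum_ofReal_div_log_mul_two_pow_eq_top {c K : ℝ} (hc : 0 < c) (hK : 2 ≤ K) :
    ∑' n : ℕ, ENNReal.ofReal (c / Real.log (K * 2 ^ n)) = ⊤ := by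
  have hlogK : 0 < Real.log K := log_pos (by linarith)
  refine top_unique ((tsum_ofReal_div_natCast_add_one_eq_top (div_pos hc hlogK)).symm.le.trans
    (ENNReal.tsum_le_tsum fun n => ENNReal.ofReal_le_ofReal ?_))
  have hlog : 0 < Real.log (K * 2 ^ n) :=
    log_pos (by nlinarith [one_le_pow₀ (M₀ := ℝ) (a := 2) (by norm_num) (n := n)])
  rw [div_div, mul_comm]
  exact div_le_div_of_nonneg_left hc.le hlog (log_mul_two_pow_le hK n)

lemma MeasureTheory.setLIntegral_eq_top_of_disjoint_subsets {α ι : Type*} [MeasurableSpace α]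
    [Countable ι] {μ : Measure α} {f : α → ENNReal} {s : Set α} {R : ι → Set α}
    (hR : ∀ i, MeasurableSet (R i)) (hdisj : Pairwise (Disjoint on R)) (hsub : ∀ i, R i ⊆ s)
    (htop : ∑' i, ∫⁻ x in R i, f x ∂μ = ⊤) : ∫⁻ x in s, f x ∂μ = ⊤ := by
  rw [← lintegral_iUnion hR hdisj] at htop
  exact top_unique (htop ▸ lintegral_mono_set (iUnion_subset hsub))

lemma MeasureTheory.mul_measure_le_setLIntegral {α : Type*} [MeasurableSpace α]
    {μ : Measure α} {f : α → ENNReal} {s : Set α} {c : ENNReal} (hs : MeasurableSet s)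
    (hf : ∀ x ∈ s, c ≤ f x) : c * μ s ≤ ∫⁻ x in s, f x ∂μ :=
  (setLIntegral_const s c).symm.le.trans (setLIntegral_mono' hs hf)

lemma ofReal_inv_mul_volume_le_ρG {s : Set G} (hs : MeasurableSet s) {b : ℝ}
    (hb : ∀ p ∈ s, 0 < p.2.2 ∧ p.2.2 ≤ b) : ENNReal.ofReal b⁻¹ * volume s ≤ ρG s := by
  rw [ρG, withDensity_apply _ hs]
  refine mul_measure_le_setLIntegral hs fun p hp => ?_
  obtain ⟨ha, hab⟩ := hb p hp
  rw [if_pos ha]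
  exact ENNReal.ofReal_le_ofReal (inv_anti₀ ha hab)

lemma one_div_log_mul_sq_anti {u K : ℝ} (hu : 1 < u) (huK : u ≤ K) :
    1 / (log K * K ^ 2) ≤ 1 / (log u * u ^ 2) := by
  have hlog : log u ≤ log K := log_le_log (by linarith) huK
  have hlogu : 0 < log u := log_pos hu
  gcongr
  linarith

def Γ'' (A B ε : ℝ) : Set G :=
  {p : G | 1 - ε < p.2.1 / p.1 ∧ p.2.1 / p.1 < 1 + ε ∧ B * p.2.2 < p.1 ∧ 2 * A < p.2.2}

def box (ε L T : ℝ) : Set G :=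
  Ioo L ((1 + ε) * L) ×ˢ Ioo L ((1 + ε) * L) ×ˢ Ioo T (2 * T)

lemma measurableSet_box (ε L T : ℝ) : MeasurableSet (box ε L T) :=
  measurableSet_Ioo.prod (measurableSet_Ioo.prod measurableSet_Ioo)

lemma volume_box {ε L : ℝ} (hε : 0 ≤ ε) (hL : 0 ≤ L) (T : ℝ) :
    volume (box ε L T) = ENNReal.ofReal (ε ^ 2 * L ^ 2 * T) := by
  have hεL : (1 + ε) * L - L = ε * L := by ring
  rw [box, Measure.volume_eq_prod, Measure.prod_prod, Measure.volume_eq_prod, Measure.prod_prod]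
  simp only [Real.volume_Ioo, hεL, two_mul, add_sub_cancel_right]
  rw [← ENNReal.ofReal_mul (by positivity), ← ENNReal.ofReal_mul (by positivity)]
  ring_nf

lemma disjoint_box {ε L L' T T' : ℝ} (hT : 2 * T ≤ T') : Disjoint (box ε L T) (box ε L' T') :=
  disjoint_prod.2 <| .inr <| disjoint_prod.2 <| .inr <|
    disjoint_left.2 fun _ ha ha' => (ha.2.trans_le hT).not_gt ha'.1

-- `x₂ / x₁ > L / ((1 + ε) L) = 1 / (1 + ε) > 1 - ε`
lemma box_subset_Γ'' {A B ε T : ℝ} (hε : 0 < ε) (hB : 0 < B) (hAT : 2 * A ≤ T) :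
    box ε (2 * B * T) T ⊆ Γ'' A B ε := by
  rintro ⟨x, y, a⟩ ⟨⟨hx₁, hx₂⟩, ⟨hy₁, hy₂⟩, ha₁, ha₂⟩
  have hx : 0 < x := by nlinarith
  refine ⟨?_, ?_, by nlinarith, by linarith⟩
  · rw [lt_div_iff₀ hx]; nlinarith
  · rw [div_lt_iff₀ hx]; nlinarith

lemma Φfun_ge_of_mem_box {B ε T : ℝ} (hε0 : 0 < ε) (hε1 : ε < 1) (hB : 0 < B) (hT : 0 < T)
    (hBT : 1 < 2 * B ^ 2 * T) {p : G} (hp : p ∈ box ε (2 * B * T) T) :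
    1 / (log (16 * B ^ 2 * T) * (16 * B ^ 2 * T) ^ 2) ≤ Φfun p := by
  obtain ⟨x, y, a⟩ := p
  obtain ⟨⟨hx₁, hx₂⟩, -, ha₁, ha₂⟩ := hp
  dsimp only at hx₁ hx₂ ha₁ ha₂
  have ha : 0 < a := hT.trans ha₁
  have hLx : 0 < 2 * B * T := by positivity
  have hx_lower : (2 * B * T) ^ 2 < x ^ 2 := pow_lt_pow_left₀ hx₁ hLx.le two_ne_zero
  have hx_upper : x ^ 2 < ((1 + ε) * (2 * B * T)) ^ 2 :=
    pow_lt_pow_left₀ hx₂ (hLx.trans hx₁).le two_ne_zero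
  have hu : 1 < a⁻¹ * x ^ 2 := by rw [lt_inv_mul_iff₀ ha]; nlinarith
  have hε_sq : (1 + ε) ^ 2 < 4 := by nlinarith
  have huK : a⁻¹ * x ^ 2 ≤ 16 * B ^ 2 * T := by
    rw [inv_mul_le_iff₀ ha]
    nlinarith [mul_lt_mul_of_pos_right hε_sq (pow_pos hLx 2),
      mul_lt_mul_of_pos_left ha₁ (by positivity : 0 < 16 * B ^ 2 * T)]
  exact one_div_log_mul_sq_anti hu huK

lemma ofReal_le_setLIntegral_box {B ε T : ℝ} (hε0 : 0 < ε) (hε1 : ε < 1) (hB : 0 < B) (hT : 0 < T)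
    (hBT : 1 < 2 * B ^ 2 * T) :
    ENNReal.ofReal (ε ^ 2 / (128 * B ^ 2) / log (16 * B ^ 2 * T)) ≤
      ∫⁻ p in box ε (2 * B * T) T, ENNReal.ofReal (Φfun p) ∂ρG := by
  set K := 16 * B ^ 2 * T
  have hlogK : 0 < log K := log_pos (by nlinarith)
  calc ENNReal.ofReal (ε ^ 2 / (128 * B ^ 2) / log K)
      = ENNReal.ofReal (1 / (log K * K ^ 2)) *
          (ENNReal.ofReal (2 * T)⁻¹ * ENNReal.ofReal (ε ^ 2 * (2 * B * T) ^ 2 * T)) := by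
        rw [← ENNReal.ofReal_mul (by positivity), ← ENNReal.ofReal_mul (by positivity)]
        congr 1
        simp only [K]
        field_simp
        ring
    _ ≤ ENNReal.ofReal (1 / (log K * K ^ 2)) * ρG (box ε (2 * B * T) T) := by
        rw [← volume_box hε0.le (by positivity) T]
        gcongr
        exact ofReal_inv_mul_volume_le_ρG (measurableSet_box _ _ _)
          fun p hp => ⟨hT.trans hp.2.2.1, hp.2.2.2.le⟩
    _ ≤ ∫⁻ p in box ε (2 * B * T) T, ENNReal.ofReal (Φfun p) ∂ρG :=
        mul_measure_le_setLIntegral (measurableSet_box _ _ _) fun p hp =>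
          ENNReal.ofReal_le_ofReal (Φfun_ge_of_mem_box hε0 hε1 hB hT hBT hp)

/-- For any `A > 1`, `B'' > 1` and `ε'' ∈ (0,1)`, the integral of `Φ` over
`Γ'' = {(x₁,x₂,a) : 1-ε'' < x₂/x₁ < 1+ε'', x₁ > B''a, a > 2A}` with respect to
`dρ = a⁻¹ dx₁ dx₂ da` diverges. -/
theorem Phi_integral_diverges (A B ε : ℝ) (hA : 1 < A) (hB : 1 < B) (hε0 : 0 < ε) (hε1 : ε < 1) :
    ∫⁻ p in {p : G | 1 - ε < p.2.1 / p.1 ∧ p.2.1 / p.1 < 1 + ε ∧ B * p.2.2 < p.1 ∧ 2 * A < p.2.2},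
      ENNReal.ofReal (Φfun p) ∂ρG = ⊤ := by
  have hB0 : 0 < B := by linarith
  set T : ℕ → ℝ := fun n => 2 * A * 2 ^ n
  have hAT : ∀ n, 2 * A ≤ T n := fun n =>
    le_mul_of_one_le_right (by linarith) (one_le_pow₀ (by norm_num))
  have hT : ∀ n, 0 < T n := fun n => by linarith [hAT n]
  have hBT : ∀ n, 1 < 2 * B ^ 2 * T n := fun n => by nlinarith [hAT n]
  refine setLIntegral_eq_top_of_disjoint_subsets (R := fun n => box ε (2 * B * T n) (T n))
    (fun n => measurableSet_box _ _ _) ?_ (fun n => box_subset_Γ'' hε0 hB0 (hAT n)) ?_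
  · refine (pairwise_disjoint_on _).2 fun m n hmn => disjoint_box ?_
    have : (2 : ℝ) ^ (m + 1) ≤ 2 ^ n := pow_le_pow_right₀ (by norm_num) hmn
    simp only [T, pow_succ] at this ⊢
    nlinarith
  · refine top_unique ?_
    calc ⊤ = ∑' n : ℕ, ENNReal.ofReal (ε ^ 2 / (128 * B ^ 2) / log (16 * B ^ 2 * (2 * A) * 2 ^ n)) :=
          (ENNReal.tsum_ofReal_div_log_mul_two_pow_eq_top (by positivity) (by nlinarith)).symm
      _ ≤ _ := ENNReal.tsum_le_tsum fun n => by
          simpa only [T, mul_assoc] using ofReal_le_setLIntegral_box hε0 hε1 hB0 (hT n) (hBT n)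
end
end
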